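/- arXiv:2605.29112 — 2 statements merged into one kernel-verified Lean document; each statement's English description precedes it below -/
import Mathlib

section
/- Let F : ℝ^n → ℝ be differentiable with L-Lipschitz gradient, A ⊆ ℝ^n nonempty, x ∈ A, 0 < γ < 1/L, z = x - γ∇F(x), and let x⁺ ∈ A satisfy ‖x⁺ - z‖ ≤ ‖x - z‖. Then F(x⁺) ≤ F(x) - (1/(2γ) - L/2) ‖x⁺ - x‖². -/
/-!
The descent lemma bounds `F x'` by `F x + ⟪∇F x, x' - x⟫ + L/2 ‖x' - x‖²`. Squaring the hypothesis
`‖x' - z‖ ≤ ‖x - z‖` with `z = x - γ ∇F x` gives `‖x' - x‖² + 2γ ⟪∇F x, x' - x⟫ ≤ 0`, which replaces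
the linear term by `-‖x' - x‖² / (2γ)`. No convexity of `A` enters: only the comparison with `x` does.
-/

open RealInnerProductSpace

variable {E : Type*} [NormedAddCommGroup E] [InnerProductSpace ℝ E]

theorem LipschitzWith.inner_sub_le_mul_sq {G : E → E} {K : NNReal} (hG : LipschitzWith K G)
    (x v : E) {t : ℝ} (ht : 0 ≤ t) :
    ⟪G (x + t • v) - G x, v⟫ ≤ K * t * ‖v‖ ^ 2 :=
  calc ⟪G (x + t • v) - G x, v⟫ ≤ ‖G (x + t • v) - G x‖ * ‖v‖ := real_inner_le_norm _ _
    _ ≤ K * ‖t • v‖ * ‖v‖ := by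
        gcongr
        simpa using hG.norm_sub_le (x + t • v) x
    _ = K * t * ‖v‖ ^ 2 := by rw [norm_smul, Real.norm_of_nonneg ht]; ring

theorem le_add_inner_add_sq_of_lipschitzWith_gradient [CompleteSpace E] {F : E → ℝ} {G : E → E}
    {K : NNReal} (hF : ∀ x, HasGradientAt F (G x) x) (hG : LipschitzWith K G) (x y : E) :
    F y ≤ F x + ⟪G x, y - x⟫ + K / 2 * ‖y - x‖ ^ 2 := by
  set v := y - x
  -- `φ' t = ⟪G (x + t • v) - G x, v⟫ - K t ‖v‖² ≤ 0` for `t ≥ 0`, so `φ 1 ≤ φ 0`.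
  let φ : ℝ → ℝ := fun t ↦ F (x + t • v) - t * ⟪G x, v⟫ - K / 2 * t ^ 2 * ‖v‖ ^ 2
  have hφ : ∀ t, HasDerivAt φ (⟪G (x + t • v) - G x, v⟫ - K * t * ‖v‖ ^ 2) t := by
    intro t
    have hline : HasDerivAt (fun t : ℝ ↦ x + t • v) v t := by
      simpa using ((hasDerivAt_id t).smul_const v).const_add x
    have hFline := (hF (x + t • v)).hasFDerivAt.comp_hasDerivAt t hline
    have hφ' := (hFline.sub ((hasDerivAt_id t).mul_const ⟪G x, v⟫)).sub
      (((hasDerivAt_pow 2 t).const_mul (K / 2 : ℝ)).mul_const (‖v‖ ^ 2))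
    refine hφ'.congr_deriv ?_
    simp only [InnerProductSpace.toDual_apply_apply, inner_sub_left]
    ring
  have hanti : AntitoneOn φ (Set.Ici 0) := by
    refine antitoneOn_of_hasDerivWithinAt_nonpos (convex_Ici 0)
      (fun t _ ↦ (hφ t).continuousAt.continuousWithinAt)
      (fun t _ ↦ (hφ t).hasDerivWithinAt) fun t ht ↦ ?_
    rw [interior_Ici] at ht
    exact sub_nonpos.2 (hG.inner_sub_le_mul_sq x v ht.le)
  have h10 : φ 1 ≤ φ 0 := hanti (Set.mem_Ici.2 le_rfl) (Set.mem_Ici.2 zero_le_one) zero_le_one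
  simp only [φ, v, one_smul, add_sub_cancel, one_mul, one_pow, mul_one, zero_smul, add_zero,
    zero_mul, sub_zero, zero_pow two_ne_zero, mul_zero] at h10
  linarith

theorem inner_le_of_norm_sub_sub_smul_le {x x' g : E} {γ : ℝ} (hγ : 0 < γ)
    (h : ‖x' - (x - γ • g)‖ ≤ ‖x - (x - γ • g)‖) :
    ⟪g, x' - x⟫ ≤ -(‖x' - x‖ ^ 2 / (2 * γ)) := by
  rw [show x' - (x - γ • g) = (x' - x) + γ • g by abel, sub_sub_cancel] at h
  have hsq := pow_le_pow_left₀ (norm_nonneg _) h 2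
  rw [norm_add_sq_real, real_inner_smul_right, real_inner_comm] at hsq
  rw [le_neg, div_le_iff₀ (by positivity)]
  linarith

theorem stmt3_general {n : ℕ} (F : EuclideanSpace ℝ (Fin n) → ℝ)
    (G : EuclideanSpace ℝ (Fin n) → EuclideanSpace ℝ (Fin n)) (L : ℝ) (hL : 0 < L)
    (hdiff : ∀ x, HasGradientAt F (G x) x)
    (hlip : LipschitzWith (Real.toNNReal L) G)
    (x : EuclideanSpace ℝ (Fin n))
    (γ : ℝ) (hγ0 : 0 < γ)
    (x' : EuclideanSpace ℝ (Fin n))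
    (hproj : ‖x' - (x - γ • G x)‖ ≤ ‖x - (x - γ • G x)‖) :
    F x' ≤ F x - (1 / (2 * γ) - L / 2) * ‖x' - x‖ ^ 2 := by
  have hdescent := le_add_inner_add_sq_of_lipschitzWith_gradient hdiff hlip x x'
  rw [Real.coe_toNNReal L hL.le] at hdescent
  have hstep := inner_le_of_norm_sub_sub_smul_le hγ0 hproj
  have hsplit : (1 / (2 * γ) - L / 2) * ‖x' - x‖ ^ 2
      = ‖x' - x‖ ^ 2 / (2 * γ) - L / 2 * ‖x' - x‖ ^ 2 := by ring
  linarith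

/-- Sufficient descent for one projected gradient step onto a possibly nonconvex set. -/
theorem stmt3 {n : ℕ} (F : EuclideanSpace ℝ (Fin n) → ℝ)
    (G : EuclideanSpace ℝ (Fin n) → EuclideanSpace ℝ (Fin n)) (L : ℝ) (hL : 0 < L)
    (hdiff : ∀ x, HasGradientAt F (G x) x)
    (hlip : LipschitzWith (Real.toNNReal L) G)
    (A : Set (EuclideanSpace ℝ (Fin n))) (hA : A.Nonempty)
    (x : EuclideanSpace ℝ (Fin n)) (hx : x ∈ A)
    (γ : ℝ) (hγ0 : 0 < γ) (hγ1 : γ < 1 / L)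
    (x' : EuclideanSpace ℝ (Fin n)) (hx' : x' ∈ A)
    (hproj : ‖x' - (x - γ • G x)‖ ≤ ‖x - (x - γ • G x)‖) :
    F x' ≤ F x - (1 / (2 * γ) - L / 2) * ‖x' - x‖ ^ 2 :=
  stmt3_general F G L hL hdiff hlip x γ hγ0 x' hproj
end

section
/- Let F : ℝ^n → ℝ be continuously differentiable, let A = S^{n-1} be the unit sphere, and suppose sequences x_t ∈ A, g_t ∈ ℝ^n satisfy: x_t → x̄, g_t → ḡ := ∇F(x̄), ‖x_{t+1} - x_t‖ → 0, and for each t the vector g_t + c_t (x_{t+1} - x_t), with c_t bounded, is normal to the unit sphere at x_{t+1} (i.e., parallel to x_{t+1}). Then (I - x̄ x̄ᵀ) ∇F(x̄) = 0. -/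
open RealInnerProductSpace

/-- Stationarity of accumulation points of projected gradient descent on the
unit sphere: passing the normal-cone conditions to the limit shows the
tangential gradient vanishes at the limit point. -/
theorem stmt18 {n : ℕ} (F : EuclideanSpace ℝ (Fin n) → ℝ) (hF : ContDiff ℝ 1 F)
    (x : ℕ → EuclideanSpace ℝ (Fin n)) (hxsphere : ∀ t, ‖x t‖ = 1)
    (g : ℕ → EuclideanSpace ℝ (Fin n)) (c : ℕ → ℝ) (M : ℝ) (hc : ∀ t, |c t| ≤ M)
    (xbar : EuclideanSpace ℝ (Fin n))
    (hx : Filter.Tendsto x Filter.atTop (nhds xbar))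
    (hg : Filter.Tendsto g Filter.atTop (nhds (gradient F xbar)))
    (hnormal : ∀ t, ∃ lam : ℝ, g t + c t • (x (t + 1) - x t) = lam • x (t + 1))
    (hstep : Filter.Tendsto (fun t => ‖x (t + 1) - x t‖) Filter.atTop (nhds 0)) :
    gradient F xbar - ⟪xbar, gradient F xbar⟫ • xbar = 0 := by
  set G := gradient F xbar with hG
  have h1 : Filter.Tendsto (fun t => x (t + 1)) Filter.atTop (nhds xbar) :=
    hx.comp (Filter.tendsto_add_atTop_nat 1)
  have hcΔ : Filter.Tendsto (fun t => c t • (x (t + 1) - x t)) Filter.atTop (nhds 0) := by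
    refine squeeze_zero_norm (fun t => ?_) (by simpa using hstep.const_mul M : Filter.Tendsto (fun t => M * ‖x (t + 1) - x t‖) Filter.atTop (nhds 0))
    rw [norm_smul]
    exact mul_le_mul_of_nonneg_right ((Real.norm_eq_abs _) ▸ hc t) (norm_nonneg _)
  have hsum : Filter.Tendsto (fun t => g t + c t • (x (t + 1) - x t)) Filter.atTop (nhds G) := by
    simpa using hg.add hcΔ
  set lam : ℕ → ℝ := fun t => ⟪x (t + 1), g t + c t • (x (t + 1) - x t)⟫ with hlamdef
  have heq : ∀ t, lam t • x (t + 1) = g t + c t • (x (t + 1) - x t) := by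
    intro t
    obtain ⟨l, hl⟩ := hnormal t
    have : lam t = l := by
      simp only [hlamdef, hl, real_inner_smul_right, real_inner_self_eq_norm_sq,
        hxsphere (t + 1)]
      ring
    rw [this, hl]
  have hlam : Filter.Tendsto lam Filter.atTop (nhds ⟪xbar, G⟫) := h1.inner hsum
  have hmain : Filter.Tendsto (fun t => lam t • x (t + 1)) Filter.atTop
      (nhds (⟪xbar, G⟫ • xbar)) := hlam.smul h1
  have h2 : Filter.Tendsto (fun t => lam t • x (t + 1)) Filter.atTop (nhds G) := by
    simpa only [heq] using hsum
  have : (⟪xbar, G⟫ : ℝ) • xbar = G := tendsto_nhds_unique hmain h2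
  rw [this, sub_self]
end
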